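/- arXiv:1910.11808 — 2 statements merged into one kernel-verified Lean document; each statement's English description precedes it below -/
import Mathlib

section
/- For every n ≥ 1, the number of nondecreasing Dyck words of semilength n equals the Fibonacci number F(2n−1), where F(1) = F(2) = 1 and F(k+2) = F(k+1) + F(k). -/
/-- Height of the prefix of length `i` of the word `w`
(`true` = U-step, `false` = D-step): number of U's minus number of D's. -/
def prefixHeight (w : List Bool) (i : ℕ) : ℤ :=
  ((w.take i).count true : ℤ) - ((w.take i).count false : ℤ)

/-- `w` is a Dyck word: every prefix has nonnegative height and the whole word
has height 0 (equally many U's and D's). -/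
def IsDyckWord (w : List Bool) : Prop :=
  (∀ i, i ≤ w.length → 0 ≤ prefixHeight w i) ∧ prefixHeight w w.length = 0

/-- A valley at (0-based) position `i`: a D-step immediately followed by a U-step. -/
def IsValley (w : List Bool) (i : ℕ) : Prop :=
  w[i]? = some false ∧ w[i + 1]? = some true

/-- A nondecreasing Dyck word: a Dyck word whose valley altitudes, read left to
right, form a nondecreasing sequence.  The altitude of a valley at position `i`
is the height of the prefix ending at that D-step, i.e. of length `i + 1`. -/
def IsNondecDyck (w : List Bool) : Prop :=
  IsDyckWord w ∧ ∀ i j, IsValley w i → IsValley w j → i ≤ j →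
    prefixHeight w (i + 1) ≤ prefixHeight w (j + 1)

/-- The set of nondecreasing Dyck words of semilength `n`. -/
def nondecDyck (n : ℕ) : Set (List Bool) :=
  {w | w.length = 2 * n ∧ IsNondecDyck w}

/-- `d n` = number of nondecreasing Dyck words of semilength `n`. -/
noncomputable def numNondecDyck (n : ℕ) : ℕ := (nondecDyck n).ncard

/-! Cut a nonempty Dyck word at its first return to height 0: `w = U v D y` with `v`, `y` Dyck.
The valley between `D` and a nonempty `y` has altitude 0, while every valley of `v` sits at
altitude at least 1, so `w` is nondecreasing iff `v` and `y` are and, when `y ≠ []`, `v` has no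
valley at all, i.e. is a pyramid `Uᵐ Dᵐ`. Counting the two cases gives
`d (n + 1) = d n + ∑_{k < n} d (k + 1)`, and `F (2n + 1) = F (2n - 1) + ∑_{k < n} F (2k + 1)`
is the same recurrence. -/

lemma prefixHeight_zero (w : List Bool) : prefixHeight w 0 = 0 := by
  simp [prefixHeight]

lemma prefixHeight_nil (i : ℕ) : prefixHeight [] i = 0 := by
  simp [prefixHeight]

lemma prefixHeight_length (w : List Bool) :
    prefixHeight w w.length = (w.count true : ℤ) - w.count false := by
  simp [prefixHeight]

lemma prefixHeight_succ {w : List Bool} {i : ℕ} (h : i < w.length) :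
    prefixHeight w (i + 1) = prefixHeight w i + if w[i] then 1 else -1 := by
  rw [prefixHeight, prefixHeight, List.take_add_one, List.getElem?_eq_getElem h]
  cases w[i] <;> grind

lemma prefixHeight_append_of_le {u : List Bool} (v : List Bool) {i : ℕ} (h : i ≤ u.length) :
    prefixHeight (u ++ v) i = prefixHeight u i := by
  simp [prefixHeight, List.take_append_of_le_length h]

lemma prefixHeight_append_add (u v : List Bool) (i : ℕ) :
    prefixHeight (u ++ v) (u.length + i) = prefixHeight u u.length + prefixHeight v i := by
  simp only [prefixHeight, List.take_append, List.take_of_length_le (Nat.le_add_right _ _),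
    add_tsub_cancel_left, List.count_append, Nat.cast_add, List.take_length]
  ring

lemma prefixHeight_cons (b : Bool) (w : List Bool) (i : ℕ) :
    prefixHeight (b :: w) (i + 1) = prefixHeight [b] 1 + prefixHeight w i := by
  rw [Nat.add_comm]
  exact prefixHeight_append_add [b] w i

lemma prefixHeight_cons_true (w : List Bool) (i : ℕ) :
    prefixHeight (true :: w) (i + 1) = 1 + prefixHeight w i :=
  prefixHeight_cons true w i

lemma prefixHeight_cons_false (w : List Bool) (i : ℕ) :
    prefixHeight (false :: w) (i + 1) = -1 + prefixHeight w i :=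
  prefixHeight_cons false w i

lemma prefixHeight_take {w : List Bool} {i k : ℕ} (h : i ≤ k) :
    prefixHeight (w.take k) i = prefixHeight w i := by
  simp [prefixHeight, List.take_take, Nat.min_eq_left h]

lemma isValley_cons_iff (b : Bool) (w : List Bool) (i : ℕ) :
    IsValley (b :: w) i ↔ (i = 0 ∧ b = false ∧ w[0]? = some true) ∨
      ∃ j, i = j + 1 ∧ IsValley w j := by
  cases i <;> simp [IsValley]

lemma IsValley.succ_lt_length {w : List Bool} {i : ℕ} (h : IsValley w i) : i + 1 < w.length := by
  by_contra! hle
  simpa [List.getElem?_eq_none hle] using h.2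

lemma isValley_append_iff (u v : List Bool) (i : ℕ) :
    IsValley (u ++ v) i ↔ IsValley u i ∨
      (i + 1 = u.length ∧ u[i]? = some false ∧ v[0]? = some true) ∨
      ∃ j, i = u.length + j ∧ IsValley v j := by
  unfold IsValley
  rcases lt_trichotomy (i + 1) u.length with h | h | h
  · grind
  · have : (u ++ v)[i + 1]? = v[0]? := by rw [List.getElem?_append_right h.ge, ← h, Nat.sub_self]
    grind
  · grind

lemma length_cons_append_cons (b c : Bool) (v y : List Bool) :
    (b :: (v ++ c :: y)).length = v.length + 2 + y.length := by
  simp only [List.length_cons, List.length_append]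
  omega

lemma prefixHeight_cons_append_cons_of_le {v y : List Bool} {j : ℕ} (h : j ≤ v.length) :
    prefixHeight (true :: (v ++ false :: y)) (j + 1) = 1 + prefixHeight v j := by
  rw [prefixHeight_cons_true, prefixHeight_append_of_le _ h]

lemma prefixHeight_cons_append_cons_add {v y : List Bool} (hv : prefixHeight v v.length = 0)
    (j : ℕ) :
    prefixHeight (true :: (v ++ false :: y)) (v.length + 2 + j) = prefixHeight y j := by
  rw [show v.length + 2 + j = v.length + (j + 1) + 1 by omega, prefixHeight_cons_true,
    prefixHeight_append_add, prefixHeight_cons_false, hv]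
  ring

lemma isValley_cons_append_cons_iff (v y : List Bool) (i : ℕ) :
    IsValley (true :: (v ++ false :: y)) i ↔ (∃ j, i = j + 1 ∧ IsValley v j) ∨
      (i = v.length + 1 ∧ y[0]? = some true) ∨ ∃ j, i = v.length + 2 + j ∧ IsValley y j := by
  simp only [isValley_cons_iff, isValley_append_iff, List.getElem?_cons_zero, Option.some.injEq,
    Bool.true_eq_false, Bool.false_eq_true, false_and, and_false, false_or, true_and]
  constructor
  · rintro ⟨j, rfl, hv | ⟨k, rfl, ⟨rfl, hy⟩ | ⟨l, rfl, hy⟩⟩⟩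
    · exact .inl ⟨j, rfl, hv⟩
    · exact .inr (.inl ⟨rfl, hy⟩)
    · exact .inr (.inr ⟨l, by omega, hy⟩)
  · rintro (⟨j, rfl, hv⟩ | ⟨rfl, hy⟩ | ⟨j, rfl, hy⟩)
    · exact ⟨j, rfl, .inl hv⟩
    · exact ⟨v.length, rfl, .inr ⟨0, rfl, .inl ⟨rfl, hy⟩⟩⟩
    · exact ⟨v.length + 1 + j, by omega, .inr ⟨j + 1, by omega, .inr ⟨j, rfl, hy⟩⟩⟩

lemma isDyckWord_nil : IsDyckWord [] :=
  ⟨fun i _ => (prefixHeight_nil i).ge, prefixHeight_nil 0⟩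

lemma IsDyckWord.getElem?_zero {w : List Bool} (hw : IsDyckWord w) (hne : w ≠ []) :
    w[0]? = some true := by
  obtain ⟨b, t, rfl⟩ := List.exists_cons_of_ne_nil hne
  cases b
  · have h := hw.1 1 (by simp)
    rw [prefixHeight_cons_false, prefixHeight_zero] at h
    norm_num at h
  · rfl

lemma IsDyckWord.length_eq {w : List Bool} (hw : IsDyckWord w) : w.length = 2 * w.count true := by
  have h := hw.2
  rw [prefixHeight_length] at h
  have := List.count_true_add_count_false w
  omega

lemma IsDyckWord.cons_append_cons {v y : List Bool} (hv : IsDyckWord v) (hy : IsDyckWord y) :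
    IsDyckWord (true :: (v ++ false :: y)) := by
  have hlen := length_cons_append_cons true false v y
  refine ⟨fun i hi => ?_, ?_⟩
  · rcases Nat.lt_or_ge i (v.length + 2) with h | h
    · cases i with
      | zero => rw [prefixHeight_zero]
      | succ j =>
        rw [prefixHeight_cons_append_cons_of_le (by omega)]
        linarith [hv.1 j (by omega)]
    · obtain ⟨j, rfl⟩ := Nat.exists_eq_add_of_le h
      rw [prefixHeight_cons_append_cons_add hv.2]
      exact hy.1 j (by omega)
  · rw [hlen, prefixHeight_cons_append_cons_add hv.2, hy.2]

lemma exists_isDyckWord_append_false {t : List Bool}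
    (hdip : ∀ i ≤ t.length, -1 ≤ prefixHeight t i) (hend : prefixHeight t t.length = -1) :
    ∃ v y, IsDyckWord v ∧ t = v ++ false :: y := by
  classical
  have hex : ∃ k, prefixHeight t k = -1 := ⟨_, hend⟩
  obtain ⟨j, hj⟩ : ∃ j, Nat.find hex = j + 1 := Nat.exists_eq_succ_of_ne_zero fun h => by
    simpa [h, prefixHeight_zero] using Nat.find_spec hex
  have hjlen : j < t.length := by have := Nat.find_min' hex hend; omega
  have hbefore : ∀ i ≤ j, 0 ≤ prefixHeight t i := fun i hi => by
    have := hdip i (by omega)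
    have := Nat.find_min hex (show i < Nat.find hex by omega)
    omega
  have hstep := prefixHeight_succ hjlen
  rw [← hj, Nat.find_spec hex] at hstep
  have htj : t[j] = false := by
    cases h : t[j]
    · rfl
    · simp only [h, if_true] at hstep
      linarith [hbefore j le_rfl]
  refine ⟨t.take j, t.drop (j + 1), ⟨fun i hi => ?_, ?_⟩, ?_⟩
  · rw [List.length_take] at hi
    rw [prefixHeight_take (by omega)]
    exact hbefore i (by omega)
  · rw [List.length_take, Nat.min_eq_left hjlen.le, prefixHeight_take le_rfl]
    simp only [htj, Bool.false_eq_true, if_false] at hstep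
    linarith
  · rw [← htj, List.getElem_cons_drop, List.take_append_drop]

lemma IsDyckWord.exists_eq_cons_append_cons {w : List Bool} (hw : IsDyckWord w) (hne : w ≠ []) :
    ∃ v y, IsDyckWord v ∧ IsDyckWord y ∧ w = true :: (v ++ false :: y) := by
  obtain ⟨b, t, rfl⟩ := List.exists_cons_of_ne_nil hne
  obtain rfl : b = true := by simpa using hw.getElem?_zero hne
  obtain ⟨v, y, hv, rfl⟩ : ∃ v y, IsDyckWord v ∧ t = v ++ false :: y := by
    refine exists_isDyckWord_append_false (fun i hi => ?_) ?_
    · have := hw.1 (i + 1) (by simpa using hi)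
      rw [prefixHeight_cons_true] at this
      linarith
    · have := hw.2
      rw [List.length_cons, prefixHeight_cons_true] at this
      linarith
  have hlen := length_cons_append_cons true false v y
  refine ⟨v, y, hv, ⟨fun i hi => ?_, ?_⟩, rfl⟩
  · have := hw.1 (v.length + 2 + i) (by omega)
    rwa [prefixHeight_cons_append_cons_add hv.2] at this
  · have := hw.2
    rwa [hlen, prefixHeight_cons_append_cons_add hv.2] at this

lemma IsDyckWord.not_length_lt_of_cons_append_cons_eq {v v' y y' : List Bool} (hv : IsDyckWord v)
    (hv' : IsDyckWord v') (h : true :: (v ++ false :: y) = true :: (v' ++ false :: y')) :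
    ¬ v.length < v'.length := by
  intro hlt
  -- at position `|v| + 2` the left word is back at height 0, the right one is still inside `v'`
  have h1 := prefixHeight_cons_append_cons_add (y := y) hv.2 0
  rw [h, prefixHeight_cons_append_cons_of_le (j := v.length + 1) hlt,
    prefixHeight_zero] at h1
  linarith [hv'.1 (v.length + 1) hlt]

lemma IsDyckWord.cons_append_cons_inj {v v' y y' : List Bool} (hv : IsDyckWord v)
    (hv' : IsDyckWord v') (h : true :: (v ++ false :: y) = true :: (v' ++ false :: y')) :
    v = v' ∧ y = y' := by
  have hlen : v.length = v'.length := by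
    have := hv.not_length_lt_of_cons_append_cons_eq hv' h
    have := hv'.not_length_lt_of_cons_append_cons_eq hv h.symm
    omega
  obtain ⟨rfl, h'⟩ := List.append_inj (List.cons_injective h) hlen
  exact ⟨rfl, List.cons_injective h'⟩

lemma IsNondecDyck.of_cons_append_cons {v y : List Bool} (hv : IsDyckWord v) (hy : IsDyckWord y)
    (hw : IsNondecDyck (true :: (v ++ false :: y))) :
    IsNondecDyck v ∧ IsNondecDyck y ∧ (y ≠ [] → ∀ i, ¬ IsValley v i) := by
  have hvalley := isValley_cons_append_cons_iff v y
  have halt_v {i : ℕ} (hi : IsValley v i) :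
      prefixHeight (true :: (v ++ false :: y)) (i + 1 + 1) = 1 + prefixHeight v (i + 1) :=
    prefixHeight_cons_append_cons_of_le hi.succ_lt_length.le
  have halt_y (j : ℕ) : prefixHeight (true :: (v ++ false :: y)) (v.length + 2 + j + 1) =
      prefixHeight y (j + 1) := prefixHeight_cons_append_cons_add hv.2 (j + 1)
  have halt_junction : prefixHeight (true :: (v ++ false :: y)) (v.length + 1 + 1) = 0 :=
    prefixHeight_cons_append_cons_add (y := y) hv.2 0
  refine ⟨⟨hv, fun i j hi hj hij => ?_⟩, ⟨hy, fun i j hi hj hij => ?_⟩, fun hne i hi => ?_⟩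
  · have := hw.2 (i + 1) (j + 1) ((hvalley _).2 (.inl ⟨i, rfl, hi⟩))
      ((hvalley _).2 (.inl ⟨j, rfl, hj⟩)) (by omega)
    rw [halt_v hi, halt_v hj] at this
    linarith
  · have := hw.2 (v.length + 2 + i) (v.length + 2 + j)
      ((hvalley _).2 (.inr (.inr ⟨i, rfl, hi⟩))) ((hvalley _).2 (.inr (.inr ⟨j, rfl, hj⟩)))
      (by omega)
    rwa [halt_y, halt_y] at this
  · have := hw.2 (i + 1) (v.length + 1) ((hvalley _).2 (.inl ⟨i, rfl, hi⟩))
      ((hvalley _).2 (.inr (.inl ⟨rfl, hy.getElem?_zero hne⟩)))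
      (by have := hi.succ_lt_length; omega)
    rw [halt_v hi, halt_junction] at this
    linarith [hv.1 (i + 1) hi.succ_lt_length.le]

lemma IsNondecDyck.cons_append_cons {v y : List Bool} (hv : IsNondecDyck v) (hy : IsNondecDyck y)
    (hflat : y ≠ [] → ∀ i, ¬ IsValley v i) : IsNondecDyck (true :: (v ++ false :: y)) := by
  refine ⟨hv.1.cons_append_cons hy.1, fun i j hi hj hij => ?_⟩
  have halt_v {i : ℕ} (hi : IsValley v i) :
      prefixHeight (true :: (v ++ false :: y)) (i + 1 + 1) = 1 + prefixHeight v (i + 1) :=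
    prefixHeight_cons_append_cons_of_le hi.succ_lt_length.le
  have halt_y (j : ℕ) : prefixHeight (true :: (v ++ false :: y)) (v.length + 2 + j + 1) =
      prefixHeight y (j + 1) := prefixHeight_cons_append_cons_add hv.1.2 (j + 1)
  have halt_junction : prefixHeight (true :: (v ++ false :: y)) (v.length + 1 + 1) = 0 :=
    prefixHeight_cons_append_cons_add (y := y) hv.1.2 0
  have hy_ne {k : ℕ} (hk : IsValley y k) : y ≠ [] := by rintro rfl; simp [IsValley] at hk
  have hvalley := isValley_cons_append_cons_iff v y
  -- a valley lies in `v`, at the junction `|v| + 1`, or in `y`; other orders contradict `i ≤ j`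
  rcases (hvalley i).1 hi with ⟨i, rfl, hvi⟩ | ⟨rfl, hy0⟩ | ⟨i, rfl, hyi⟩ <;>
    rcases (hvalley j).1 hj with ⟨j, rfl, hvj⟩ | ⟨rfl, hy0'⟩ | ⟨j, rfl, hyj⟩
  · rw [halt_v hvi, halt_v hvj]
    linarith [hv.2 i j hvi hvj (by omega)]
  · exact absurd hvi (hflat (by rintro rfl; simp at hy0') i)
  · exact absurd hvi (hflat (hy_ne hyj) i)
  · have := hvj.succ_lt_length; omega
  · exact le_rfl
  · rw [halt_junction, halt_y]
    exact hy.1.1 _ hyj.succ_lt_length.le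
  · have := hvj.succ_lt_length; omega
  · omega
  · rw [halt_y, halt_y]
    exact hy.2 i j hyi hyj (by omega)

def pyramid : ℕ → List Bool
  | 0 => []
  | m + 1 => true :: (pyramid m ++ [false])

lemma length_pyramid (m : ℕ) : (pyramid m).length = 2 * m := by
  induction m with
  | zero => rfl
  | succ m ih =>
    simp only [pyramid, List.length_cons, List.length_append, ih, List.length_nil]
    ring

lemma isDyckWord_pyramid (m : ℕ) : IsDyckWord (pyramid m) := by
  induction m with
  | zero => exact isDyckWord_nil
  | succ m ih => exact ih.cons_append_cons isDyckWord_nil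

lemma not_isValley_pyramid (m i : ℕ) : ¬ IsValley (pyramid m) i := by
  induction m generalizing i with
  | zero => simp [pyramid, IsValley]
  | succ m ih =>
    rw [pyramid, isValley_cons_append_cons_iff]
    rintro (⟨j, -, hj⟩ | ⟨-, h⟩ | ⟨j, -, hj⟩)
    · exact ih j hj
    · simp at h
    · simp [IsValley] at hj

lemma isNondecDyck_pyramid (m : ℕ) : IsNondecDyck (pyramid m) :=
  ⟨isDyckWord_pyramid m, fun i _ hi => absurd hi (not_isValley_pyramid m i)⟩

lemma IsDyckWord.exists_eq_pyramid {w : List Bool} (hw : IsDyckWord w)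
    (hflat : ∀ i, ¬ IsValley w i) : ∃ m, w = pyramid m := by
  induction h : w.length using Nat.strong_induction_on generalizing w with
  | _ n ih =>
  rcases eq_or_ne w [] with rfl | hne
  · exact ⟨0, rfl⟩
  obtain ⟨v, y, hv, hy, rfl⟩ := hw.exists_eq_cons_append_cons hne
  have hvalley := isValley_cons_append_cons_iff v y
  obtain rfl : y = [] := by
    by_contra hy_ne
    exact hflat _ ((hvalley _).2 (.inr (.inl ⟨rfl, hy.getElem?_zero hy_ne⟩)))
  obtain ⟨m, rfl⟩ := ih v.length (by rw [length_cons_append_cons] at h; omega) hv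
    (fun i hi => hflat _ ((hvalley _).2 (.inl ⟨i, rfl, hi⟩))) rfl
  exact ⟨m + 1, rfl⟩

lemma isNondecDyck_nil : IsNondecDyck [] := isNondecDyck_pyramid 0

lemma nondecDyck_zero : nondecDyck 0 = {[]} := by
  ext w
  simp only [nondecDyck, Set.mem_ofPred_eq, Set.mem_singleton_iff, Nat.mul_zero,
    List.length_eq_zero_iff]
  exact ⟨fun h => h.1, fun h => ⟨h, h ▸ isNondecDyck_nil⟩⟩

lemma nondecDyck_finite (n : ℕ) : (nondecDyck n).Finite :=
  (List.finite_length_eq Bool (2 * n)).subset fun _ hw => hw.1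

lemma nondecDyck_succ (n : ℕ) :
    nondecDyck (n + 1) = (fun v => true :: (v ++ [false])) '' nondecDyck n ∪
      ⋃ k ∈ Finset.range n,
        (fun y => true :: (pyramid (n - 1 - k) ++ false :: y)) '' nondecDyck (k + 1) := by
  ext w
  simp only [Set.mem_union, Set.mem_image, Set.mem_iUnion, Finset.mem_range, exists_prop]
  constructor
  · rintro ⟨hlen, hw⟩
    obtain ⟨v, y, hv, hy, rfl⟩ := hw.1.exists_eq_cons_append_cons (by rintro rfl; simp at hlen)
    obtain ⟨hvn, hyn, hflat⟩ := hw.of_cons_append_cons hv hy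
    rw [length_cons_append_cons] at hlen
    rcases eq_or_ne y [] with rfl | hne
    · exact .inl ⟨v, ⟨by rw [List.length_nil] at hlen; omega, hvn⟩, rfl⟩
    · obtain ⟨m, rfl⟩ := hv.exists_eq_pyramid (hflat hne)
      have hy_len := hy.length_eq
      have hy_pos := List.length_pos_iff.2 hne
      rw [length_pyramid] at hlen
      refine .inr ⟨y.count true - 1, by omega, y, ⟨by omega, hyn⟩, ?_⟩
      rw [show n - 1 - (y.count true - 1) = m by omega]
  · rintro (⟨v, ⟨hlen, hvn⟩, rfl⟩ | ⟨k, hk, y, ⟨hlen, hyn⟩, rfl⟩)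
    · exact ⟨by rw [length_cons_append_cons, hlen, List.length_nil]; ring,
        hvn.cons_append_cons isNondecDyck_nil (absurd rfl)⟩
    · refine ⟨by rw [length_cons_append_cons, hlen, length_pyramid]; omega,
        (isNondecDyck_pyramid _).cons_append_cons hyn fun _ => not_isValley_pyramid _⟩

lemma numNondecDyck_succ (n : ℕ) :
    numNondecDyck (n + 1) = numNondecDyck n + ∑ k ∈ Finset.range n, numNondecDyck (k + 1) := by
  have hdisj : Disjoint ((fun v => true :: (v ++ [false])) '' nondecDyck n)
      (⋃ k ∈ Finset.range n,
        (fun y => true :: (pyramid (n - 1 - k) ++ false :: y)) '' nondecDyck (k + 1)) := by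
    simp only [Set.disjoint_left, Set.mem_image, Set.mem_iUnion, not_exists, not_and]
    rintro _ ⟨v, hv, rfl⟩ k - y hy h
    obtain ⟨-, rfl⟩ := (isDyckWord_pyramid _).cons_append_cons_inj hv.2.1 h
    simpa using hy.1
  have hpair : (Finset.range n : Set ℕ).PairwiseDisjoint fun k =>
      (fun y => true :: (pyramid (n - 1 - k) ++ false :: y)) '' nondecDyck (k + 1) := by
    intro k _ k' _ hkk'
    simp only [Function.onFun, Set.disjoint_left, Set.mem_image, not_exists, not_and]
    rintro _ ⟨y, hy, rfl⟩ y' hy' h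
    obtain ⟨-, rfl⟩ := (isDyckWord_pyramid _).cons_append_cons_inj (isDyckWord_pyramid _) h
    exact hkk' (by have := hy.1; have := hy'.1; omega)
  rw [numNondecDyck, nondecDyck_succ, Set.ncard_union_eq hdisj ((nondecDyck_finite n).image _)
    ((Finset.finite_toSet _).biUnion fun k _ => (nondecDyck_finite _).image _),
    ← Finset.set_biUnion_coe,
    Set.ncard_image_of_injective _ fun v v' h => by simpa using h,
    (Finset.finite_toSet _).ncard_biUnion (fun k _ => (nondecDyck_finite _).image _) hpair,
    finsum_mem_coe_finset]
  congr 1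
  exact Finset.sum_congr rfl fun k _ =>
    Set.ncard_image_of_injective _ fun y y' h => by simpa using h

lemma sum_range_fib_two_mul_add_one (n : ℕ) :
    ∑ k ∈ Finset.range n, Nat.fib (2 * k + 1) = Nat.fib (2 * n) := by
  induction n with
  | zero => simp
  | succ n ih => rw [Finset.sum_range_succ, ih, Nat.mul_succ, Nat.fib_add_two]

lemma numNondecDyck_succ_eq_fib (n : ℕ) : numNondecDyck (n + 1) = Nat.fib (2 * n + 1) := by
  induction n using Nat.strong_induction_on with
  | _ n ih =>
  rw [numNondecDyck_succ, Finset.sum_congr rfl fun k hk => ih k (Finset.mem_range.1 hk),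
    sum_range_fib_two_mul_add_one]
  rcases n with _ | n
  · simp [numNondecDyck, nondecDyck_zero]
  · rw [ih n n.lt_succ_self, show 2 * (n + 1) + 1 = 2 * n + 1 + 2 by ring, Nat.fib_add_two]
    rfl

/-- For every `n ≥ 1`, the number of nondecreasing Dyck words of semilength `n`
equals the Fibonacci number `F(2n − 1)` (with `F 1 = F 2 = 1`). -/
theorem nondecDyck_eq_fib (n : ℕ) (hn : 1 ≤ n) :
    numNondecDyck n = Nat.fib (2 * n - 1) := by
  obtain ⟨k, rfl⟩ := Nat.exists_eq_add_of_le' hn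
  rw [numNondecDyck_succ_eq_fib]
  exact congrArg Nat.fib (by omega)
end

section
/- Let r(n) denote the sum, over all nondecreasing Dyck words w of semilength n, of the number of returns of w (indices 1 ≤ i ≤ 2n at which the prefix of w of length i has height 0). Then in the ring of formal power series over ℤ, (1 − 2X)(1 − 3X + X²) · Σ_{n≥0} r(n) X^n = X(1 − X)². -/
/-- Number of returns of `w`: indices `1 ≤ i ≤ |w|` where the prefix of length
`i` has height `0`. -/
def numReturns (w : List Bool) : ℕ :=
  ((Finset.Icc 1 w.length).filter fun i => prefixHeight w i = 0).card

/-- `r n`: total number of returns over all nondecreasing Dyck words of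
semilength `n`. -/
noncomputable def totalReturns (n : ℕ) : ℕ :=
  ∑ᶠ w ∈ nondecDyck n, numReturns w

/-!
A nonempty nondecreasing Dyck word is either an arch `U v D` over a nondecreasing word `v`, or
a pyramid `UᵏDᵏ` followed by a nonempty nondecreasing word: everything before its first return
is valley-free, because the valley at that return has altitude `0`. Writing `d n` for the number
of nondecreasing words of semilength `n`, this gives `d (n+1) = d n + ∑_{m=1}^{n} d m` and
`r (n+1) = d n + ∑_{m=1}^{n} (d m + r m)`, i.e. `(1 - 3X + X²) D = 1 - 2X` and
`(1 - 2X) R = X (2 - X) D - X`; eliminating `D` gives the identity.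
-/

namespace NondecDyck

open List

def height (w : List Bool) : ℤ := (w.count true : ℤ) - (w.count false : ℤ)

theorem prefixHeight_eq_height_take (w : List Bool) (i : ℕ) :
    prefixHeight w i = height (w.take i) := rfl

@[simp] theorem height_nil : height [] = 0 := rfl

@[simp] theorem height_cons (b : Bool) (w : List Bool) :
    height (b :: w) = (if b then 1 else -1) + height w := by
  cases b <;> simp [height] <;> ring

@[simp] theorem height_append (x y : List Bool) : height (x ++ y) = height x + height y := by
  simp only [height, count_append]; push_cast; ring

@[simp] theorem height_replicate_true (k : ℕ) : height (replicate k true) = k := by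
  simp [height, count_replicate]

@[simp] theorem height_replicate_false (k : ℕ) : height (replicate k false) = -k := by
  simp [height, count_replicate]

theorem prefixHeight_of_length_le {w : List Bool} {i : ℕ} (h : w.length ≤ i) :
    prefixHeight w i = height w := by
  rw [prefixHeight_eq_height_take, take_of_length_le h]

theorem prefixHeight_length (w : List Bool) : prefixHeight w w.length = height w :=
  prefixHeight_of_length_le le_rfl

theorem prefixHeight_succ {w : List Bool} {i : ℕ} (h : i < w.length) :
    prefixHeight w (i + 1) = prefixHeight w i + if w[i] then 1 else -1 := by
  rw [prefixHeight_eq_height_take, prefixHeight_eq_height_take, take_add_one,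
    getElem?_eq_getElem h]
  cases w[i] <;> simp

theorem prefixHeight_append_of_le {x : List Bool} (y : List Bool) {i : ℕ} (h : i ≤ x.length) :
    prefixHeight (x ++ y) i = prefixHeight x i := by
  rw [prefixHeight_eq_height_take, prefixHeight_eq_height_take, take_append,
    Nat.sub_eq_zero_of_le h, take_zero, append_nil]

theorem prefixHeight_append_length_add (x y : List Bool) (i : ℕ) :
    prefixHeight (x ++ y) (x.length + i) = height x + prefixHeight y i := by
  rw [prefixHeight_eq_height_take, prefixHeight_eq_height_take, take_append, height_append,
    take_of_length_le (by omega), Nat.add_sub_cancel_left]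

theorem isDyckWord_iff {w : List Bool} :
    IsDyckWord w ↔ (∀ i, 0 ≤ prefixHeight w i) ∧ height w = 0 := by
  refine ⟨fun ⟨hpos, hend⟩ => ⟨fun i => ?_, ?_⟩,
    fun ⟨hpos, hend⟩ => ⟨fun i _ => hpos i, ?_⟩⟩
  · rcases le_total i w.length with h | h
    · exact hpos i h
    · rw [prefixHeight_of_length_le h, ← prefixHeight_length]; exact hpos _ le_rfl
  · rwa [← prefixHeight_length]
  · rwa [prefixHeight_length]

theorem IsDyckWord.height_eq_zero {w : List Bool} (hw : IsDyckWord w) : height w = 0 :=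
  prefixHeight_length w ▸ hw.2

theorem numReturns_eq_card_Ioc (w : List Bool) :
    numReturns w = ((Finset.Ioc 0 w.length).filter fun i => prefixHeight w i = 0).card := rfl

theorem numReturns_append {x : List Bool} (u : List Bool) (hx : height x = 0) :
    numReturns (x ++ u) = numReturns x + numReturns u := by
  have hshift : Finset.Ioc x.length (x.length + u.length) =
      (Finset.Ioc 0 u.length).map (addLeftEmbedding x.length) := by simp
  simp only [numReturns_eq_card_Ioc, length_append]
  rw [← Finset.Ioc_union_Ioc_eq_Ioc (Nat.zero_le _) (Nat.le_add_right _ _),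
    Finset.filter_union, Finset.card_union_of_disjoint
      (Finset.disjoint_filter_filter (Finset.Ioc_disjoint_Ioc_of_le le_rfl)),
    hshift, Finset.filter_map, Finset.card_map]
  congr 2
  · exact Finset.filter_congr fun i hi => by
      rw [prefixHeight_append_of_le u (Finset.mem_Ioc.mp hi).2]
  · exact Finset.filter_congr fun i _ => by
      simp [prefixHeight_append_length_add, hx]

theorem IsValley.succ_lt_length {w : List Bool} {i : ℕ} (h : IsValley w i) :
    i + 1 < w.length := by
  by_contra hc
  simp [IsValley, getElem?_eq_none (not_lt.mp hc)] at h

theorem isValley_append_of_succ_lt {x : List Bool} (y : List Bool) {i : ℕ}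
    (h : i + 1 < x.length) : IsValley (x ++ y) i ↔ IsValley x i := by
  simp only [IsValley, getElem?_append_left h, getElem?_append_left (Nat.lt_of_succ_lt h)]

theorem isValley_append_length_add (x y : List Bool) (i : ℕ) :
    IsValley (x ++ y) (x.length + i) ↔ IsValley y i := by
  simp only [IsValley, Nat.add_assoc, getElem?_append_right (Nat.le_add_right _ _),
    Nat.add_sub_cancel_left]

theorem isValley_append_false {v : List Bool} {i : ℕ} :
    IsValley (v ++ [false]) i ↔ IsValley v i := by
  refine ⟨fun h => ?_,
    fun h => (isValley_append_of_succ_lt _ (IsValley.succ_lt_length h)).mpr h⟩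
  have hlt : i + 1 < v.length := by
    by_contra hc
    have := h.2
    rw [getElem?_append_right (not_lt.mp hc)] at this
    grind
  exact (isValley_append_of_succ_lt _ hlt).mp h

theorem isValley_of_prefixHeight_eq_zero {w : List Bool} (hw : IsDyckWord w) {i : ℕ}
    (hi : i + 1 < w.length) (h0 : prefixHeight w (i + 1) = 0) : IsValley w i := by
  have hpos := hw.1
  have hdown := prefixHeight_succ (Nat.lt_of_succ_lt hi)
  have hup := prefixHeight_succ hi
  have h1 := hpos i (by omega)
  have h2 := hpos (i + 2) (by omega)
  simp only [IsValley, getElem?_eq_getElem hi, getElem?_eq_getElem (Nat.lt_of_succ_lt hi),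
    Option.some.injEq]
  constructor <;> split at hdown <;> split at hup <;> grind

theorem isDyckWord_append {x : List Bool} (u : List Bool) (hx : height x = 0) :
    IsDyckWord (x ++ u) ↔ IsDyckWord x ∧ IsDyckWord u := by
  simp only [isDyckWord_iff, height_append, hx, zero_add, and_true]
  constructor
  · intro hpos
    refine ⟨fun i => ?_, fun i => ?_, hpos.2⟩
    · rcases le_total i x.length with h | h
      · rw [← prefixHeight_append_of_le u h]; exact hpos.1 i
      · rw [prefixHeight_of_length_le h, hx]
    · simpa [prefixHeight_append_length_add, hx] using hpos.1 (x.length + i)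
  · rintro ⟨hxpos, hupos, hu⟩
    refine ⟨fun i => ?_, hu⟩
    rcases le_total i x.length with h | h
    · rw [prefixHeight_append_of_le u h]; exact hxpos i
    · obtain ⟨j, rfl⟩ := Nat.exists_eq_add_of_le h
      rw [prefixHeight_append_length_add, hx, zero_add]; exact hupos j

theorem isNondecDyck_of_append {x u : List Bool} (hx : height x = 0)
    (h : IsNondecDyck (x ++ u)) : IsNondecDyck u := by
  refine ⟨((isDyckWord_append u hx).mp h.1).2, fun i j hi hj hij => ?_⟩
  have := h.2 (x.length + i) (x.length + j) ((isValley_append_length_add x u i).mpr hi)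
    ((isValley_append_length_add x u j).mpr hj) (by omega)
  simpa only [Nat.add_assoc, prefixHeight_append_length_add, hx, zero_add] using this

theorem isNondecDyck_append {x u : List Bool} (hx : IsDyckWord x) (hxv : ∀ i, ¬IsValley x i)
    (hu : IsNondecDyck u) : IsNondecDyck (x ++ u) := by
  have hx0 := IsDyckWord.height_eq_zero hx
  have hw := (isDyckWord_append u hx0).mpr ⟨hx, hu.1⟩
  refine ⟨hw, fun i j hi hj hij => ?_⟩
  by_cases hix : i + 1 < x.length
  · exact absurd ((isValley_append_of_succ_lt u hix).mp hi) (hxv i)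
  by_cases hi' : i < x.length
  · rw [show i + 1 = x.length by omega, ← append_nil x, prefixHeight_append_of_le _ le_rfl,
      append_nil, prefixHeight_length, hx0]
    exact (isDyckWord_iff.mp hw).1 _
  obtain ⟨i, rfl⟩ := Nat.exists_eq_add_of_le (not_lt.mp hi')
  obtain ⟨j, rfl⟩ := Nat.exists_eq_add_of_le (le_trans (not_lt.mp hi') hij)
  simp only [Nat.add_assoc, prefixHeight_append_length_add, hx0, zero_add]
  exact hu.2 i j ((isValley_append_length_add x u i).mp hi)
    ((isValley_append_length_add x u j).mp hj) (by omega)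

theorem eq_replicate_append_replicate_of_forall_not_isValley {w : List Bool}
    (h : ∀ i, ¬IsValley w i) : ∃ a b, w = replicate a true ++ replicate b false := by
  induction w with
  | nil => exact ⟨0, 0, rfl⟩
  | cons x t ih =>
    obtain ⟨a, b, rfl⟩ := ih fun i hi => h (i + 1) (by simpa [IsValley] using hi)
    cases x with
    | true => exact ⟨a + 1, b, rfl⟩
    | false =>
      obtain _ | a := a
      · exact ⟨0, b + 1, rfl⟩
      · exact absurd ⟨rfl, rfl⟩ (h 0)

def arch (v : List Bool) : List Bool := true :: (v ++ [false])

@[simp] theorem length_arch (v : List Bool) : (arch v).length = v.length + 2 := by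
  simp [arch]

@[simp] theorem height_arch (v : List Bool) : height (arch v) = height v := by
  simp [arch]

theorem prefixHeight_arch_succ {v : List Bool} {i : ℕ} (h : i ≤ v.length) :
    prefixHeight (arch v) (i + 1) = prefixHeight v i + 1 := by
  have hsplit : prefixHeight (arch v) (i + 1) = height [true] + prefixHeight (v ++ [false]) i := by
    rw [add_comm]; exact prefixHeight_append_length_add [true] _ i
  rw [hsplit, prefixHeight_append_of_le _ h]; simp; ring

theorem prefixHeight_arch_pos {v : List Bool} (hv : IsDyckWord v) {i : ℕ} (h1 : 1 ≤ i)
    (h2 : i ≤ v.length + 1) : 0 < prefixHeight (arch v) i := by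
  obtain ⟨i, rfl⟩ := Nat.exists_eq_add_of_le' h1
  rw [prefixHeight_arch_succ (by omega)]
  linarith [hv.1 i (by omega)]

theorem not_isValley_arch_zero (v : List Bool) : ¬IsValley (arch v) 0 := by
  simp [IsValley, arch]

theorem isValley_arch_succ {v : List Bool} {i : ℕ} :
    IsValley (arch v) (i + 1) ↔ IsValley v i := by
  rw [← @isValley_append_false v i, add_comm]
  exact isValley_append_length_add [true] (v ++ [false]) i

theorem isNondecDyck_arch {v : List Bool} (hv : IsNondecDyck v) : IsNondecDyck (arch v) := by
  have hv0 := IsDyckWord.height_eq_zero hv.1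
  refine ⟨isDyckWord_iff.mpr ⟨fun i => ?_, by simpa using hv0⟩, fun i j hi hj hij => ?_⟩
  · rcases i with _ | i
    · exact le_rfl
    rcases le_or_gt i v.length with h | h
    · rw [prefixHeight_arch_succ h]; linarith [hv.1.1 i h]
    · rw [prefixHeight_of_length_le (by simp; omega), height_arch, hv0]
  · obtain _ | i := i
    · exact absurd hi (not_isValley_arch_zero v)
    obtain _ | j := j
    · omega
    rw [isValley_arch_succ] at hi hj
    rw [prefixHeight_arch_succ (IsValley.succ_lt_length hi).le,
      prefixHeight_arch_succ (IsValley.succ_lt_length hj).le]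
    linarith [hv.2 i j hi hj (by omega)]

theorem isNondecDyck_of_arch {v : List Bool} (h : IsNondecDyck (arch v)) (hv : IsDyckWord v) :
    IsNondecDyck v := by
  refine ⟨hv, fun i j hi hj hij => ?_⟩
  have := h.2 (i + 1) (j + 1) (isValley_arch_succ.mpr hi) (isValley_arch_succ.mpr hj) (by omega)
  rwa [prefixHeight_arch_succ (IsValley.succ_lt_length hi).le,
    prefixHeight_arch_succ (IsValley.succ_lt_length hj).le, add_le_add_iff_right] at this

theorem numReturns_arch {v : List Bool} (hv : IsDyckWord v) : numReturns (arch v) = 1 := by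
  rw [numReturns_eq_card_Ioc, Finset.card_eq_one]
  refine ⟨v.length + 2, Finset.eq_singleton_iff_unique_mem.mpr ⟨?_, fun i hi => ?_⟩⟩
  · simp only [Finset.mem_filter, Finset.mem_Ioc]
    refine ⟨by simp, ?_⟩
    rw [← length_arch, prefixHeight_length, height_arch]; exact IsDyckWord.height_eq_zero hv
  · simp only [Finset.mem_filter, Finset.mem_Ioc, length_arch] at hi
    by_contra hne
    exact (prefixHeight_arch_pos hv hi.1.1 (by omega)).ne' hi.2

def pyramid : ℕ → List Bool
  | 0 => []
  | k + 1 => arch (pyramid k)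

@[simp] theorem length_pyramid (k : ℕ) : (pyramid k).length = 2 * k := by
  induction k with
  | zero => rfl
  | succ k ih => simp [pyramid, ih]; ring

theorem pyramid_eq_replicate (k : ℕ) : pyramid k = replicate k true ++ replicate k false := by
  induction k with
  | zero => rfl
  | succ k ih => simp [pyramid, arch, ih, replicate_succ, ← replicate_succ']

theorem isNondecDyck_pyramid (k : ℕ) : IsNondecDyck (pyramid k) := by
  induction k with
  | zero => exact ⟨⟨fun i _ => by simp [pyramid, prefixHeight_eq_height_take], rfl⟩,
      fun i _ hi => absurd hi (by simp [pyramid, IsValley])⟩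
  | succ k ih => exact isNondecDyck_arch ih

@[simp] theorem height_pyramid (k : ℕ) : height (pyramid k) = 0 :=
  IsDyckWord.height_eq_zero (isNondecDyck_pyramid k).1

theorem not_isValley_pyramid (k i : ℕ) : ¬IsValley (pyramid k) i := by
  induction k generalizing i with
  | zero => simp [IsValley, pyramid]
  | succ k ih =>
    obtain _ | i := i
    · exact not_isValley_arch_zero _
    · exact fun h => ih i (isValley_arch_succ.mp h)

theorem eq_pyramid_of_forall_not_isValley {w : List Bool} (hw : IsDyckWord w)
    (h : ∀ i, ¬IsValley w i) : w = pyramid (w.length / 2) := by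
  obtain ⟨a, b, rfl⟩ := eq_replicate_append_replicate_of_forall_not_isValley h
  have hab : a = b := by
    have := IsDyckWord.height_eq_zero hw
    simp at this; omega
  subst hab
  rw [pyramid_eq_replicate]; congr <;> simp <;> omega

theorem numReturns_pyramid_append {k : ℕ} (hk : 0 < k) (u : List Bool) :
    numReturns (pyramid k ++ u) = 1 + numReturns u := by
  obtain ⟨k, rfl⟩ := Nat.exists_eq_add_of_le' hk
  rw [numReturns_append u (height_pyramid _), pyramid,
    numReturns_arch (isNondecDyck_pyramid k).1]

theorem exists_eq_arch {w : List Bool} (hw : IsNondecDyck w) (hne : w ≠ [])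
    (hprime : ∀ i, 1 ≤ i → i < w.length → prefixHeight w i ≠ 0) :
    ∃ v, w = arch v ∧ IsNondecDyck v := by
  obtain _ | ⟨b, t⟩ := w
  · exact absurd rfl hne
  have hw0 := IsDyckWord.height_eq_zero hw.1
  have hpos : ∀ i, 1 ≤ i → i < (b :: t).length → 0 < prefixHeight (b :: t) i :=
    fun i h1 h2 => lt_of_le_of_ne (hw.1.1 i h2.le) (hprime i h1 h2).symm
  obtain rfl | ⟨v, c, rfl⟩ := t.eq_nil_or_concat'
  · cases b <;> simp at hw0
  have hb : b = true := by
    have := hpos 1 le_rfl (by simp)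
    cases b <;> simp_all [prefixHeight_eq_height_take]
  have hc : c = false := by
    have hlast := hpos (v.length + 1) (by omega) (by simp)
    rw [← cons_append, ← length_cons, prefixHeight_append_of_le _ le_rfl,
      prefixHeight_length] at hlast
    cases c <;> simp_all; omega
  subst hb hc
  refine ⟨v, rfl, isNondecDyck_of_arch hw ⟨fun i hi => ?_, ?_⟩⟩
  · have := hpos (i + 1) (by omega) (by simp; omega)
    rw [← arch, prefixHeight_arch_succ hi] at this
    omega
  · rw [prefixHeight_length, ← height_arch]; exact hw0

theorem exists_eq_pyramid_append {w : List Bool} (hw : IsNondecDyck w) {i : ℕ} (hi1 : 1 ≤ i)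
    (hi : i < w.length) (h0 : prefixHeight w i = 0) :
    ∃ k u, 0 < k ∧ 2 * k ≤ i ∧ w = pyramid k ++ u ∧ IsNondecDyck u := by
  classical
  have hex : ∃ i, 1 ≤ i ∧ i < w.length ∧ prefixHeight w i = 0 := ⟨i, hi1, hi, h0⟩
  obtain ⟨h1, hlt, hzero⟩ := Nat.find_spec hex
  set i₀ := Nat.find hex
  have hle : i₀ ≤ i := Nat.find_min' hex ⟨hi1, hi, h0⟩
  have hfirst : ∀ j, 1 ≤ j → j < i₀ → 0 < prefixHeight w j := fun j hj1 hj =>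
    lt_of_le_of_ne (hw.1.1 j (by omega)) fun h => Nat.find_min hex hj ⟨hj1, by omega, h.symm⟩
  have hvalley : IsValley w (i₀ - 1) :=
    isValley_of_prefixHeight_eq_zero hw.1 (by omega) (by rwa [Nat.sub_add_cancel h1])
  set x := w.take i₀
  have hsplit : x ++ w.drop i₀ = w := take_append_drop _ _
  have hxlen : x.length = i₀ := length_take_of_le hlt.le
  have hx0 : height x = 0 := hzero
  -- a valley of `x` has positive altitude but precedes the valley of altitude `0` at `i₀ - 1`
  have hxv : ∀ j, ¬IsValley x j := fun j hj => by
    have hjx := IsValley.succ_lt_length hj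
    have hjw : IsValley w j := hsplit ▸ (isValley_append_of_succ_lt _ hjx).mpr hj
    have := hw.2 j (i₀ - 1) hjw hvalley (by omega)
    rw [Nat.sub_add_cancel h1, hzero] at this
    linarith [hfirst (j + 1) (by omega) (by omega)]
  rw [← hsplit] at hw
  have hpyr := eq_pyramid_of_forall_not_isValley ((isDyckWord_append _ hx0).mp hw.1).1 hxv
  have hlen := congrArg length hpyr
  rw [length_pyramid, hxlen] at hlen
  refine ⟨i₀ / 2, w.drop i₀, by omega, by omega, ?_, isNondecDyck_of_append hx0 hw⟩
  calc w = x ++ w.drop i₀ := hsplit.symm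
    _ = _ := by rw [hpyr, hxlen]

theorem mem_nondecDyck_succ {n : ℕ} {w : List Bool} :
    w ∈ nondecDyck (n + 1) ↔ (∃ v ∈ nondecDyck n, arch v = w) ∨
      ∃ m ∈ Finset.Icc 1 n, ∃ u ∈ nondecDyck m, pyramid (n + 1 - m) ++ u = w := by
  simp only [nondecDyck, Set.mem_ofPred_eq, Finset.mem_Icc]
  constructor
  · rintro ⟨hlen, hw⟩
    by_cases hret : ∃ i, 1 ≤ i ∧ i < w.length ∧ prefixHeight w i = 0
    · obtain ⟨i, hi1, hi, h0⟩ := hret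
      have hin : i < 2 * (n + 1) := hlen ▸ hi
      obtain ⟨k, u, hk, hki, rfl, hu⟩ := exists_eq_pyramid_append hw hi1 hi h0
      simp only [length_append, length_pyramid] at hlen
      exact .inr ⟨n + 1 - k, by omega, u, ⟨by omega, hu⟩,
        by rw [Nat.sub_sub_self (by omega)]⟩
    · push Not at hret
      obtain ⟨v, rfl, hv⟩ := exists_eq_arch hw (ne_nil_of_length_pos (by omega)) hret
      exact .inl ⟨v, ⟨by simp at hlen; omega, hv⟩, rfl⟩
  · rintro (⟨v, ⟨hlen, hv⟩, rfl⟩ | ⟨m, hm, u, ⟨hlen, hu⟩, rfl⟩)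
    · exact ⟨by simp [hlen]; ring, isNondecDyck_arch hv⟩
    · exact ⟨by simp [hlen]; omega,
        isNondecDyck_append (isNondecDyck_pyramid _).1 (not_isValley_pyramid _) hu⟩

theorem prefixHeight_pyramid_append_two_mul (k : ℕ) (u : List Bool) :
    prefixHeight (pyramid k ++ u) (2 * k) = 0 := by
  rw [← length_pyramid k, prefixHeight_append_of_le _ le_rfl, prefixHeight_length, height_pyramid]

theorem arch_ne_pyramid_append {v : List Bool} (hv : IsDyckWord v) {k : ℕ} (hk : 0 < k)
    (hkv : 2 * k ≤ v.length + 1) (u : List Bool) : arch v ≠ pyramid k ++ u := fun h =>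
  (prefixHeight_arch_pos hv (by omega) hkv).ne' (h ▸ prefixHeight_pyramid_append_two_mul k u)

theorem pyramid_append_ne_of_lt {j k : ℕ} (hj : 0 < j) (hjk : j < k) (u u' : List Bool) :
    pyramid j ++ u ≠ pyramid k ++ u' := by
  obtain ⟨k, rfl⟩ := Nat.exists_eq_add_of_le' (hj.trans hjk)
  intro h
  have := prefixHeight_pyramid_append_two_mul j u
  rw [h, prefixHeight_append_of_le _ (by simp; omega)] at this
  exact (prefixHeight_arch_pos (isNondecDyck_pyramid k).1 (by omega) (by simp; omega)).ne' this

theorem finite_nondecDyck (n : ℕ) : (nondecDyck n).Finite :=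
  (List.finite_length_eq Bool (2 * n)).subset fun _ hw => hw.1

noncomputable def nondecDyckFinset (n : ℕ) : Finset (List Bool) := (finite_nondecDyck n).toFinset

@[simp] theorem mem_nondecDyckFinset {n : ℕ} {w : List Bool} :
    w ∈ nondecDyckFinset n ↔ w ∈ nondecDyck n :=
  Set.Finite.mem_toFinset _

theorem numNondecDyck_eq_card (n : ℕ) : numNondecDyck n = (nondecDyckFinset n).card :=
  Set.ncard_eq_toFinset_card _ _

theorem totalReturns_eq_sum (n : ℕ) :
    totalReturns n = ∑ w ∈ nondecDyckFinset n, numReturns w := by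
  rw [totalReturns, ← finsum_mem_coe_finset, nondecDyckFinset, Set.Finite.coe_toFinset]

theorem nondecDyckFinset_succ (n : ℕ) :
    nondecDyckFinset (n + 1) = (nondecDyckFinset n).image arch ∪
      (Finset.Icc 1 n).biUnion fun m => (nondecDyckFinset m).image (pyramid (n + 1 - m) ++ ·) := by
  ext w
  simp [mem_nondecDyck_succ]

theorem sum_nondecDyckFinset_succ {M : Type*} [AddCommMonoid M] (f : List Bool → M) (n : ℕ) :
    ∑ w ∈ nondecDyckFinset (n + 1), f w = ∑ v ∈ nondecDyckFinset n, f (arch v) +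
      ∑ m ∈ Finset.Icc 1 n, ∑ u ∈ nondecDyckFinset m, f (pyramid (n + 1 - m) ++ u) := by
  have harch : Disjoint ((nondecDyckFinset n).image arch)
      ((Finset.Icc 1 n).biUnion fun m =>
        (nondecDyckFinset m).image (pyramid (n + 1 - m) ++ ·)) := by
    simp only [Finset.disjoint_left, Finset.mem_image, Finset.mem_biUnion, Finset.mem_Icc,
      mem_nondecDyckFinset]
    rintro _ ⟨v, hv, rfl⟩ ⟨m, hm, u, -, h⟩
    exact arch_ne_pyramid_append hv.2.1 (by omega) (by rw [hv.1]; omega) u h.symm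
  have hpyr : (Finset.Icc 1 n : Set ℕ).PairwiseDisjoint
      fun m => (nondecDyckFinset m).image (pyramid (n + 1 - m) ++ ·) := by
    intro m hm m' hm' hne
    simp only [Finset.coe_Icc, Set.mem_Icc] at hm hm'
    simp only [Function.onFun, Finset.disjoint_left, Finset.mem_image]
    rintro _ ⟨u, -, rfl⟩ ⟨u', -, h⟩
    rcases lt_or_gt_of_ne hne with hlt | hlt
    · exact pyramid_append_ne_of_lt (by omega) (by omega) u' u h
    · exact pyramid_append_ne_of_lt (by omega) (by omega) u u' h.symm
  rw [nondecDyckFinset_succ, Finset.sum_union harch, Finset.sum_image (fun _ _ _ _ h => by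
    simpa [arch] using h), Finset.sum_biUnion hpyr]
  congr 1
  exact Finset.sum_congr rfl fun m _ =>
    Finset.sum_image fun _ _ _ _ h => List.append_cancel_left h

theorem numNondecDyck_succ (n : ℕ) :
    numNondecDyck (n + 1) = numNondecDyck n + ∑ m ∈ Finset.Icc 1 n, numNondecDyck m := by
  simp only [numNondecDyck_eq_card, Finset.card_eq_sum_ones, sum_nondecDyckFinset_succ]

theorem totalReturns_succ (n : ℕ) :
    totalReturns (n + 1) =
      numNondecDyck n + ∑ m ∈ Finset.Icc 1 n, (numNondecDyck m + totalReturns m) := by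
  rw [totalReturns_eq_sum, sum_nondecDyckFinset_succ, numNondecDyck_eq_card,
    Finset.card_eq_sum_ones]
  congr 1
  · exact Finset.sum_congr rfl fun v hv => numReturns_arch (mem_nondecDyckFinset.mp hv).2.1
  · refine Finset.sum_congr rfl fun m hm => ?_
    simp only [Finset.mem_Icc] at hm
    simp only [numReturns_pyramid_append (show 0 < n + 1 - m by omega), Finset.sum_add_distrib,
      numNondecDyck_eq_card, Finset.card_eq_sum_ones, totalReturns_eq_sum]

theorem nondecDyck_zero : nondecDyck 0 = {[]} := by
  ext w
  simp only [nondecDyck, Set.mem_ofPred_eq, Set.mem_singleton_iff, Nat.mul_zero,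
    length_eq_zero_iff]
  exact ⟨And.left, fun h => ⟨h, h ▸ isNondecDyck_pyramid 0⟩⟩

theorem numNondecDyck_zero : numNondecDyck 0 = 1 := by
  rw [numNondecDyck, nondecDyck_zero, Set.ncard_singleton]

theorem totalReturns_zero : totalReturns 0 = 0 := by
  rw [totalReturns, nondecDyck_zero, finsum_mem_singleton]; rfl

theorem numNondecDyck_one : numNondecDyck 1 = 1 := by
  simp [numNondecDyck_succ, numNondecDyck_zero]

theorem totalReturns_one : totalReturns 1 = 1 := by
  simp [totalReturns_succ, numNondecDyck_zero]

theorem numNondecDyck_add_two (n : ℕ) :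
    (numNondecDyck (n + 2) : ℤ) = 3 * numNondecDyck (n + 1) - numNondecDyck n := by
  have h1 : numNondecDyck (n + 2) = _ := numNondecDyck_succ (n + 1)
  have h0 := numNondecDyck_succ n
  rw [Finset.sum_Icc_succ_top (by omega)] at h1
  omega

theorem totalReturns_add_two (n : ℕ) : (totalReturns (n + 2) : ℤ) =
    2 * totalReturns (n + 1) + 2 * numNondecDyck (n + 1) - numNondecDyck n := by
  have h1 : totalReturns (n + 2) = _ := totalReturns_succ (n + 1)
  have h0 := totalReturns_succ n
  rw [Finset.sum_Icc_succ_top (by omega)] at h1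
  omega

open PowerSeries

theorem numNondecDyck_gf :
    (1 - 3 * X + X ^ 2 : ℤ⟦X⟧) * mk (fun n => (numNondecDyck n : ℤ)) = 1 - 2 * X := by
  rw [show (3 : ℤ⟦X⟧) = C 3 from rfl, show (2 : ℤ⟦X⟧) = C 2 from rfl]
  ext (_ | _ | n) <;>
    simp only [sub_mul, add_mul, one_mul, mul_assoc, pow_two, map_add, map_sub, coeff_C_mul,
      coeff_succ_X_mul, coeff_zero_X_mul, coeff_mk, coeff_one, coeff_X] <;>
    simp [numNondecDyck_zero, numNondecDyck_one, numNondecDyck_add_two]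

theorem totalReturns_gf_of_numNondecDyck :
    (1 - 2 * X : ℤ⟦X⟧) * mk (fun n => (totalReturns n : ℤ)) =
      X * (2 - X) * mk (fun n => (numNondecDyck n : ℤ)) - X := by
  rw [show (2 : ℤ⟦X⟧) = C 2 from rfl]
  ext (_ | _ | n) <;>
    simp only [sub_mul, mul_sub, one_mul, mul_assoc, map_sub, coeff_C_mul, coeff_succ_X_mul,
      coeff_zero_X_mul, coeff_mk, coeff_X]
  · simp [totalReturns_zero]
  · simp [numNondecDyck_zero, totalReturns_zero, totalReturns_one]
  · simp [totalReturns_add_two]; ring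

end NondecDyck

/-- In `ℤ⟦X⟧`: `(1 − 2X)(1 − 3X + X²) · Σ r(n) Xⁿ = X(1 − X)²`. -/
theorem totalReturns_gf :
    ((1 : PowerSeries ℤ) - 2 * PowerSeries.X) *
        (1 - 3 * PowerSeries.X + PowerSeries.X ^ 2) *
        PowerSeries.mk (fun n => (totalReturns n : ℤ)) =
      PowerSeries.X * (1 - PowerSeries.X) ^ 2 := by
  linear_combination (PowerSeries.X * (2 - PowerSeries.X)) * NondecDyck.numNondecDyck_gf +
    (1 - 3 * PowerSeries.X + PowerSeries.X ^ 2) * NondecDyck.totalReturns_gf_of_numNondecDyck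
end
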